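/- arXiv:2101.11396 — 6 statements merged into one kernel-verified Lean document; each statement's English description precedes it below -/
import Mathlib

section
/- For nonnegative integers a, m, the double integral I_m(a,a) = ((-1)^m/m!) ∫_{(0,1)^2} (log^m(xy)) x^a y^a / (1-xy) dx dy equals (m+1) ζ(m+2, a+1). -/
/-!
Expanding `1 / (1 - xy)` as a geometric series turns the integral into
`(-1)^m ∑ₙ ∫∫ (-log x - log y)^m (xy)^(a+n)`, and since all these terms are nonnegative on the
square, summation and integration commute. By the binomial theorem each term is a combination of
products of the one-dimensional moments `∫₀¹ x^c (-log x)^j dx = j! / (c+1)^(j+1)` (substitute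
`x = e^(-t)` and use the Gamma integral), and `∑ⱼ C(m,j) j! (m-j)! = (m+1)!` gives
`∫∫ (-log xy)^m (xy)^c = (m+1)! / (c+1)^(m+2)`.
-/

open MeasureTheory Set Real
open scoped Nat

lemma integral_pow_mul_exp_neg_mul_Ioi {s : ℝ} (hs : 0 < s) (j : ℕ) :
    ∫ t in Ioi 0, t ^ j * exp (-(s * t)) = j ! / s ^ (j + 1) := by
  have key := integral_rpow_mul_exp_neg_mul_Ioi (a := j + 1) (by positivity) hs
  simp only [add_sub_cancel_right, rpow_natCast] at key
  rw [key, Gamma_nat_eq_factorial, ← Nat.cast_succ, rpow_natCast, one_div_pow, one_div_mul_eq_div]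

lemma image_exp_neg_Ioi : (fun t : ℝ => exp (-t)) '' Ioi 0 = Ioo 0 1 := by
  ext x
  constructor
  · rintro ⟨t, ht, rfl⟩
    exact ⟨exp_pos _, exp_lt_one_iff.mpr (neg_lt_zero.mpr ht)⟩
  · rintro ⟨hx0, hx1⟩
    exact ⟨-log x, neg_pos.mpr (log_neg hx0 hx1), by simp [exp_log hx0]⟩

lemma integral_Ioo_zero_one_eq_integral_Ioi_exp_neg (g : ℝ → ℝ) :
    ∫ x in Ioo 0 1, g x = ∫ t in Ioi 0, exp (-t) * g (exp (-t)) := by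
  rw [← image_exp_neg_Ioi, integral_image_eq_integral_abs_deriv_smul measurableSet_Ioi
    (fun t _ => (hasDerivAt_neg t).exp.hasDerivWithinAt) (exp_injective.comp neg_injective).injOn]
  simp [abs_of_pos (exp_pos _)]

lemma integral_pow_mul_neg_log_pow (n j : ℕ) :
    ∫ x in Ioo 0 1, x ^ n * (-log x) ^ j = j ! / ((n : ℝ) + 1) ^ (j + 1) := by
  rw [integral_Ioo_zero_one_eq_integral_Ioi_exp_neg,
    ← integral_pow_mul_exp_neg_mul_Ioi (by positivity : (0 : ℝ) < n + 1) j]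
  refine setIntegral_congr_fun measurableSet_Ioi fun t _ => ?_
  rw [log_exp, neg_neg, ← exp_nat_mul, show -((n + 1) * t) = n * -t + -t by ring, exp_add]
  ring

-- A non-integrable function has Bochner integral `0`.
lemma integrableOn_pow_mul_neg_log_pow (n j : ℕ) :
    IntegrableOn (fun x : ℝ => x ^ n * (-log x) ^ j) (Ioo 0 1) :=
  .of_integral_ne_zero (by rw [integral_pow_mul_neg_log_pow]; positivity)

lemma neg_log_add_pow_mul_pow_eq_sum (c m : ℕ) (x y : ℝ) :
    (-log x + -log y) ^ m * (x * y) ^ c = ∑ j ∈ Finset.range (m + 1),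
      (m.choose j : ℝ) * ((x ^ c * (-log x) ^ j) * (y ^ c * (-log y) ^ (m - j))) := by
  rw [add_pow, Finset.sum_mul, mul_pow]
  exact Finset.sum_congr rfl fun j _ => by ring

lemma choose_mul_div_pow_mul_div_pow {m j : ℕ} (hj : j ≤ m) (r : ℝ) :
    (m.choose j : ℝ) * (j ! / r ^ (j + 1) * ((m - j) ! / r ^ (m - j + 1))) = m ! / r ^ (m + 2) := by
  rw [div_mul_div_comm, ← pow_add, show j + 1 + (m - j + 1) = m + 2 by omega, ← mul_div_assoc,
    ← mul_assoc]
  exact_mod_cast congrArg (fun k : ℕ => (k : ℝ) / r ^ (m + 2))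
    (Nat.choose_mul_factorial_mul_factorial hj)

lemma integral_unitSquare_neg_log_add_pow_mul_pow (c m : ℕ) :
    ∫ p in Ioo (0 : ℝ) 1 ×ˢ Ioo (0 : ℝ) 1, (-log p.1 + -log p.2) ^ m * (p.1 * p.2) ^ c
      = (m + 1)! / ((c : ℝ) + 1) ^ (m + 2) := by
  have hint (j : ℕ) := ((integrableOn_pow_mul_neg_log_pow c j).mul_prod
    (integrableOn_pow_mul_neg_log_pow c (m - j))).const_mul (m.choose j : ℝ)
  simp_rw [neg_log_add_pow_mul_pow_eq_sum]
  rw [Measure.volume_eq_prod, ← Measure.prod_restrict, integral_finsetSum _ fun j _ => hint j]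
  have hterm : ∀ j ∈ Finset.range (m + 1), ∫ p, (m.choose j : ℝ) *
      ((p.1 ^ c * (-log p.1) ^ j) * (p.2 ^ c * (-log p.2) ^ (m - j)))
        ∂(volume.restrict (Ioo (0 : ℝ) 1)).prod (volume.restrict (Ioo (0 : ℝ) 1))
      = m ! / ((c : ℝ) + 1) ^ (m + 2) := fun j hj => by
    rw [integral_const_mul, integral_prod_mul (f := fun x : ℝ => x ^ c * (-log x) ^ j)
      (g := fun y : ℝ => y ^ c * (-log y) ^ (m - j)), integral_pow_mul_neg_log_pow,
      integral_pow_mul_neg_log_pow,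
      choose_mul_div_pow_mul_div_pow (Nat.lt_succ_iff.mp (Finset.mem_range.mp hj))]
  rw [Finset.sum_congr rfl hterm, Finset.sum_const, Finset.card_range, nsmul_eq_mul,
    Nat.factorial_succ, Nat.cast_mul, mul_div_assoc]

lemma integrableOn_unitSquare_neg_log_add_pow_mul_pow (c m : ℕ) :
    IntegrableOn (fun p : ℝ × ℝ => (-log p.1 + -log p.2) ^ m * (p.1 * p.2) ^ c)
      (Ioo (0 : ℝ) 1 ×ˢ Ioo (0 : ℝ) 1) :=
  .of_integral_ne_zero (by rw [integral_unitSquare_neg_log_add_pow_mul_pow]; positivity)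

lemma neg_log_add_pow_mul_pow_nonneg {x y : ℝ} (hx : x ∈ Icc 0 1) (hy : y ∈ Icc 0 1) (c m : ℕ) :
    0 ≤ (-log x + -log y) ^ m * (x * y) ^ c := by
  have := log_nonpos hx.1 hx.2
  have := log_nonpos hy.1 hy.2
  exact mul_nonneg (pow_nonneg (by linarith) _) (pow_nonneg (mul_nonneg hx.1 hy.1) _)

lemma integral_tsum_of_nonneg {α ι : Type*} [MeasurableSpace α] [Countable ι] {μ : Measure α}
    {F : ι → α → ℝ} (hint : ∀ i, Integrable (F i) μ) (hnonneg : ∀ i, 0 ≤ᵐ[μ] F i)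
    (hsum : Summable fun i => ∫ a, F i a ∂μ) :
    ∫ a, ∑' i, F i a ∂μ = ∑' i, ∫ a, F i a ∂μ :=
  (integral_tsum_of_summable_integral_norm hint <| hsum.congr fun i =>
    integral_congr_ae <| (hnonneg i).mono fun _ h => (norm_of_nonneg h).symm).symm

lemma log_mul_pow_mul_pow_div_one_sub_eq_tsum {x y : ℝ} (hx : x ∈ Ioo 0 1) (hy : y ∈ Ioo 0 1)
    (a m : ℕ) :
    log (x * y) ^ m * x ^ a * y ^ a / (1 - x * y)
      = (-1) ^ m * ∑' n : ℕ, (-log x + -log y) ^ m * (x * y) ^ (a + n) := by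
  have hxy : x * y < 1 := mul_lt_one_of_nonneg_of_lt_one_left hx.1.le hx.2 hy.2.le
  simp_rw [pow_add, ← mul_assoc]
  rw [tsum_mul_left, tsum_geometric_of_lt_one (by nlinarith [hx.1, hy.1]) hxy, ← neg_add,
    ← log_mul hx.1.ne' hy.1.ne', ← mul_assoc, ← mul_assoc, ← mul_pow, neg_one_mul, neg_neg,
    div_eq_mul_inv]
  ring

lemma summable_factorial_div_nat_add_one_pow (a m : ℕ) :
    Summable fun n : ℕ => (m + 1)! / ((↑(a + n) : ℝ) + 1) ^ (m + 2) := by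
  refine ((Real.summable_one_div_nat_pow.mpr (by omega : 1 < m + 2)).comp_injective
    (add_left_injective (a + 1))).mul_left ((m + 1)! : ℝ) |>.congr fun n => ?_
  simp only [Function.comp_apply]
  push_cast
  ring

theorem stmt_6 (a m : ℕ) :
    ((-1 : ℝ) ^ m / (m.factorial : ℝ)) *
        ∫ p in (Set.Ioo (0 : ℝ) 1) ×ˢ (Set.Ioo (0 : ℝ) 1),
          (Real.log (p.1 * p.2)) ^ m * p.1 ^ a * p.2 ^ a / (1 - p.1 * p.2) =
      (m + 1 : ℝ) * ∑' k : ℕ, 1 / ((a : ℝ) + 1 + k) ^ (m + 2) := by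
  have hS : MeasurableSet (Ioo (0 : ℝ) 1 ×ˢ Ioo (0 : ℝ) 1) :=
    measurableSet_Ioo.prod measurableSet_Ioo
  have hterm_nonneg (n : ℕ) : 0 ≤ᵐ[volume.restrict (Ioo (0 : ℝ) 1 ×ˢ Ioo (0 : ℝ) 1)]
      fun p : ℝ × ℝ => (-log p.1 + -log p.2) ^ m * (p.1 * p.2) ^ (a + n) := by
    filter_upwards [ae_restrict_mem hS] with p ⟨hx, hy⟩
    exact neg_log_add_pow_mul_pow_nonneg (Ioo_subset_Icc_self hx) (Ioo_subset_Icc_self hy) _ _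
  have hterm_int (n : ℕ) := integrableOn_unitSquare_neg_log_add_pow_mul_pow (a + n) m
  rw [setIntegral_congr_fun hS fun p hp => log_mul_pow_mul_pow_div_one_sub_eq_tsum hp.1 hp.2 a m,
    integral_const_mul, integral_tsum_of_nonneg hterm_int hterm_nonneg (by
      simpa only [integral_unitSquare_neg_log_add_pow_mul_pow] using
        summable_factorial_div_nat_add_one_pow a m)]
  have hzeta : ∑' n : ℕ, ((m + 1)! : ℝ) / ((↑(a + n) : ℝ) + 1) ^ (m + 2)
      = (m + 1)! * ∑' k : ℕ, 1 / ((a : ℝ) + 1 + k) ^ (m + 2) := by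
    rw [← tsum_mul_left]
    congr 1 with n
    push_cast
    ring
  have hsign : (-1 : ℝ) ^ m * (-1) ^ m = 1 := by rw [← mul_pow]; norm_num
  simp_rw [integral_unitSquare_neg_log_add_pow_mul_pow, hzeta]
  generalize ∑' k : ℕ, 1 / ((a : ℝ) + 1 + k) ^ (m + 2) = ζ
  rw [Nat.factorial_succ, Nat.cast_mul, Nat.cast_succ, div_mul_eq_mul_div,
    div_eq_iff (by positivity)]
  linear_combination (↑m + 1) * ↑m ! * ζ * hsign
end

section
/- For t ≥ 0 and nonnegative integers a_1,...,a_n (n ≥ 2), the integral ∫_{(0,1)^n} ∏_{i=1}^n x_i^{a_i + t} / (1 - ∏_{i=1}^n x_i) dx_1···dx_n equals Σ_{k=0}^∞ ∏_{i=1}^n 1/(1 + a_i + k + t). -/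
/-!
On the open unit cube `0 < ∏ xᵢ < 1`, so `1 / (1 - ∏ xᵢ)` expands as the geometric series
`∑ₖ (∏ xᵢ)ᵏ`. With `cᵢ = aᵢ + t`, the `k`-th term `∏ xᵢ ^ (cᵢ + k)` is a product of one-variable
powers, whose integral over the cube is `∏ᵢ 1 / (cᵢ + k + 1)` by Fubini. These integrals are
nonnegative and bounded by `(k + 1)⁻ⁿ` with `n ≥ 2`, so their series converges and integral and
sum may be exchanged.
-/

open MeasureTheory Set Finset

lemma integral_rpow_Ioo_zero_one {c : ℝ} (hc : -1 < c) :
    ∫ y in Ioo (0 : ℝ) 1, y ^ c = (c + 1)⁻¹ := by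
  rw [restrict_Ioo_eq_restrict_Ioc, ← intervalIntegral.integral_of_le zero_le_one,
    integral_rpow (Or.inl hc), Real.one_rpow, Real.zero_rpow (by linarith), sub_zero, one_div]

lemma summable_prod_inv_add_nat_add_one {ι : Type*} [Fintype ι] {c : ι → ℝ}
    (hc : ∀ i, 0 ≤ c i) (hι : 2 ≤ Fintype.card ι) :
    Summable fun k : ℕ => ∏ i, (c i + k + 1)⁻¹ := by
  have hsq : Summable fun k : ℕ => ((k : ℝ) + 1)⁻¹ ^ 2 := by
    refine ((summable_nat_add_iff 1).2 (Real.summable_one_div_nat_pow.2 one_lt_two)).congr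
      fun k => ?_
    push_cast
    rw [one_div, inv_pow]
  refine hsq.of_nonneg_of_le (fun k => prod_nonneg fun i _ => by have := hc i; positivity)
    fun k => ?_
  have hk : ((k : ℝ) + 1)⁻¹ ≤ 1 := inv_le_one_of_one_le₀ (by simp)
  calc ∏ i, (c i + k + 1)⁻¹ ≤ ∏ _i : ι, ((k : ℝ) + 1)⁻¹ :=
        prod_le_prod (fun i _ => by have := hc i; positivity)
          fun i _ => inv_anti₀ (by positivity) (by linarith [hc i])
    _ = ((k : ℝ) + 1)⁻¹ ^ Fintype.card ι := by rw [prod_const, card_univ]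
    _ ≤ ((k : ℝ) + 1)⁻¹ ^ 2 := pow_le_pow_of_le_one (by positivity) hk hι

section UnitCube

variable {ι : Type*} [Fintype ι]

lemma integrableOn_prod_rpow_unitCube {c : ι → ℝ} (hc : ∀ i, -1 < c i) :
    IntegrableOn (fun x : ι → ℝ => ∏ i, x i ^ c i) (univ.pi fun _ => Ioo 0 1) := by
  rw [IntegrableOn, volume_pi, Measure.restrict_pi_pi]
  exact Integrable.fintype_prod fun i =>
    (intervalIntegral.integrableOn_Ioo_rpow_iff zero_lt_one).2 (hc i)

lemma integral_prod_rpow_unitCube {c : ι → ℝ} (hc : ∀ i, -1 < c i) :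
    ∫ x : ι → ℝ in univ.pi (fun _ => Ioo 0 1), ∏ i, x i ^ c i = ∏ i, (c i + 1)⁻¹ := by
  rw [volume_pi, Measure.restrict_pi_pi, integral_fintype_prod_eq_prod fun i y => y ^ c i]
  exact prod_congr rfl fun i _ => integral_rpow_Ioo_zero_one (hc i)

lemma prod_lt_one_of_mem_unitCube [Nonempty ι] {x : ι → ℝ}
    (hx : x ∈ univ.pi fun _ => Ioo (0 : ℝ) 1) : ∏ i, x i < 1 := by
  simpa using prod_lt_prod_of_nonempty (fun i _ => (hx i (mem_univ i)).1)
    (fun i _ => (hx i (mem_univ i)).2) univ_nonempty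

lemma prod_rpow_div_one_sub_prod_eq_tsum [Nonempty ι] (c : ι → ℝ) {x : ι → ℝ}
    (hx : x ∈ univ.pi fun _ => Ioo (0 : ℝ) 1) :
    (∏ i, x i ^ c i) / (1 - ∏ i, x i) = ∑' k : ℕ, ∏ i, x i ^ (c i + k) := by
  have hx0 : ∀ i, 0 < x i := fun i => (hx i (mem_univ i)).1
  rw [div_eq_mul_inv, ← tsum_geometric_of_lt_one (prod_nonneg fun i _ => (hx0 i).le)
    (prod_lt_one_of_mem_unitCube hx), ← tsum_mul_left]
  refine tsum_congr fun k => ?_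
  rw [← Finset.prod_pow, ← prod_mul_distrib]
  exact prod_congr rfl fun i _ => by rw [Real.rpow_add (hx0 i), Real.rpow_natCast]

theorem integral_prod_rpow_div_one_sub_prod_unitCube {c : ι → ℝ} (hc : ∀ i, 0 ≤ c i)
    (hι : 2 ≤ Fintype.card ι) :
    ∫ x : ι → ℝ in univ.pi (fun _ => Ioo 0 1), (∏ i, x i ^ c i) / (1 - ∏ i, x i) =
      ∑' k : ℕ, ∏ i, (c i + k + 1)⁻¹ := by
  have : Nonempty ι := Fintype.card_pos_iff.1 (by omega)
  have hck : ∀ k : ℕ, ∀ i, -1 < c i + k := fun k i => by linarith [hc i, k.cast_nonneg (α := ℝ)]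
  have hnorm : ∀ k : ℕ, ∫ x in univ.pi (fun _ => Ioo (0 : ℝ) 1), ‖∏ i, x i ^ (c i + k)‖ =
      ∏ i, (c i + k + 1)⁻¹ := fun k => by
    rw [← integral_prod_rpow_unitCube (hck k)]
    refine setIntegral_congr_fun (MeasurableSet.univ_pi fun _ => measurableSet_Ioo)
      fun x hx => Real.norm_of_nonneg (prod_nonneg fun i _ => ?_)
    exact Real.rpow_nonneg (hx i (mem_univ i)).1.le _
  rw [setIntegral_congr_fun (MeasurableSet.univ_pi fun _ => measurableSet_Ioo)
      fun x hx => prod_rpow_div_one_sub_prod_eq_tsum c hx,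
    ← integral_tsum_of_summable_integral_norm (fun k => integrableOn_prod_rpow_unitCube (hck k))
      (by simpa only [hnorm] using summable_prod_inv_add_nat_add_one hc hι)]
  exact tsum_congr fun k => integral_prod_rpow_unitCube (hck k)

end UnitCube

theorem stmt_9 (n : ℕ) (hn : 2 ≤ n) (a : Fin n → ℕ) (t : ℝ) (ht : 0 ≤ t) :
    ∫ x : Fin n → ℝ in Set.univ.pi (fun _ => Set.Ioo (0 : ℝ) 1),
        (∏ i, x i ^ ((a i : ℝ) + t)) / (1 - ∏ i, x i) =
      ∑' k : ℕ, ∏ i, 1 / (1 + (a i : ℝ) + k + t) := by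
  rw [integral_prod_rpow_div_one_sub_prod_unitCube (c := fun i => (a i : ℝ) + t)
    (fun i => by positivity) (by simpa using hn)]
  exact tsum_congr fun k => prod_congr rfl fun i _ => by ring
end

section
/- Let a_1 < a_2 < ... < a_n be nonnegative integers with n ≥ 2, and λ_i = ∏_{j≠i} 1/(a_j - a_i). Then Σ_{k=0}^∞ ∏_{i=1}^n 1/(1 + a_i + k) = Σ_{i=1}^{n-1} λ_i Σ_{k=a_i+1}^{a_n} 1/k. -/
/-!
The weights `λ_i` are the barycentric (nodal) weights of the nodes `-a_i`, so partial fractions give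
`∏ᵢ 1/(x + a_i) = ∑ᵢ λ_i/(x + a_i)`, and `∑ᵢ λ_i = 0` because it is the coefficient of `x^(n-1)` in the
Lagrange interpolant of the constant `1`. Writing `H` for the harmonic numbers, the `K`-th partial sum
of the series is therefore `∑ᵢ λ_i (H(a_i + K) - H(a_i)) = ∑ᵢ λ_i (H(a_i + K) - H K) - ∑ᵢ λ_i H(a_i)`,
which tends to `-∑ᵢ λ_i H(a_i)` since `H(c + K) - H K → 0`. The `i = n` term of the right-hand side
vanishes, and `∑ᵢ λ_i = 0` again turns it into the same value.
-/

open Finset Filter Topology Lagrange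

section NodalWeight

variable {F ι : Type*} [Field F] [DecidableEq ι] {s : Finset ι} {v : ι → F}

theorem sum_nodalWeight_eq_zero (hvs : Set.InjOn v s) (hs : 2 ≤ #s) :
    ∑ i ∈ s, nodalWeight s v i = 0 := by
  have h := coeff_eq_sum hvs (P := 1) (by rw [Polynomial.degree_one]; exact_mod_cast (by omega))
  rw [Polynomial.coeff_one, if_neg (by omega)] at h
  simpa [nodalWeight, prod_inv_distrib, div_eq_mul_inv] using h.symm

theorem prod_inv_sub_eq_sum_nodalWeight_mul (hvs : Set.InjOn v s) (hs : s.Nonempty) {x : F}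
    (hx : ∀ i ∈ s, x ≠ v i) :
    ∏ i ∈ s, (x - v i)⁻¹ = ∑ i ∈ s, nodalWeight s v i * (x - v i)⁻¹ := by
  have h := eval_interpolate_not_at_node 1 hx
  simp only [interpolate_one hvs hs, Polynomial.eval_one, eval_nodal, Pi.one_apply,
    mul_one] at h
  rw [prod_inv_distrib, eq_comm]
  exact eq_inv_of_mul_eq_one_right h.symm

end NodalWeight

theorem harmonic_add_sub_harmonic (c K : ℕ) :
    (harmonic (c + K) : ℝ) - harmonic c = ∑ k ∈ range K, ((c : ℝ) + 1 + k)⁻¹ := by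
  induction K with
  | zero => simp
  | succ K ih =>
    rw [← add_assoc, harmonic_succ, sum_range_succ, ← ih]
    push_cast
    ring

theorem sum_Icc_inv_eq_harmonic_sub {c m : ℕ} (h : c ≤ m) :
    ∑ k ∈ Icc (c + 1) m, (k : ℝ)⁻¹ = harmonic m - harmonic c := by
  induction m, h using Nat.le_induction with
  | base => simp
  | succ m hcm ih =>
    rw [sum_Icc_succ_top (by omega), ih, harmonic_succ]
    push_cast
    ring

theorem tendsto_harmonic_add_sub_harmonic (c : ℕ) :
    Tendsto (fun K : ℕ ↦ (harmonic (c + K) : ℝ) - harmonic K) atTop (𝓝 0) := by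
  simp_rw [add_comm c, harmonic_add_sub_harmonic]
  have h (j : ℕ) : Tendsto (fun K : ℕ ↦ ((K : ℝ) + 1 + j)⁻¹) atTop (𝓝 0) :=
    tendsto_inv_atTop_zero.comp <| tendsto_atTop_add_const_right _ _ <|
      tendsto_atTop_add_const_right _ _ tendsto_natCast_atTop_atTop
  simpa using tendsto_finsetSum (range c) fun j _ ↦ h j

theorem tendsto_sum_range_sum_mul_inv_add {ι : Type*} {s : Finset ι} {w : ι → ℝ}
    (hw : ∑ i ∈ s, w i = 0) (c : ι → ℕ) :
    Tendsto (fun K ↦ ∑ k ∈ range K, ∑ i ∈ s, w i * ((c i : ℝ) + 1 + k)⁻¹) atTop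
      (𝓝 (-∑ i ∈ s, w i * harmonic (c i))) := by
  have partial_sum (K : ℕ) : ∑ k ∈ range K, ∑ i ∈ s, w i * ((c i : ℝ) + 1 + k)⁻¹ =
      ∑ i ∈ s, w i * ((harmonic (c i + K) : ℝ) - harmonic K) -
        ∑ i ∈ s, w i * harmonic (c i) := by
    rw [sum_comm]
    simp_rw [← mul_sum, ← harmonic_add_sub_harmonic]
    have : ∑ i ∈ s, w i * (harmonic K : ℝ) = 0 := by rw [← sum_mul, hw, zero_mul]
    simp only [mul_sub, sum_sub_distrib]
    linarith
  simp_rw [partial_sum]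
  simpa using (tendsto_finsetSum s fun i _ ↦
    (tendsto_harmonic_add_sub_harmonic (c i)).const_mul (w i)).sub_const
      (∑ i ∈ s, w i * (harmonic (c i) : ℝ))

theorem hasSum_prod_inv_add_one_add {ι : Type*} [DecidableEq ι] {s : Finset ι} {a : ι → ℕ}
    (ha : Set.InjOn a s) (hs : 2 ≤ #s) :
    HasSum (fun k : ℕ ↦ ∏ i ∈ s, ((a i : ℝ) + 1 + k)⁻¹)
      (-∑ i ∈ s, nodalWeight s (fun i ↦ -(a i : ℝ)) i * harmonic (a i)) := by
  have hv : Set.InjOn (fun i ↦ -(a i : ℝ)) s := fun i hi j hj h ↦ ha hi hj (by simpa using h)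
  have partial_fractions (k : ℕ) : ∏ i ∈ s, ((a i : ℝ) + 1 + k)⁻¹ =
      ∑ i ∈ s, nodalWeight s (fun i ↦ -(a i : ℝ)) i * ((a i : ℝ) + 1 + k)⁻¹ := by
    have h := prod_inv_sub_eq_sum_nodalWeight_mul hv (card_pos.1 (by omega)) (x := 1 + (k : ℝ))
      fun i _ ↦ by linarith [(a i).cast_nonneg (α := ℝ), k.cast_nonneg (α := ℝ)]
    simpa only [sub_neg_eq_add, add_comm _ (a _ : ℝ), add_assoc] using h
  rw [hasSum_iff_tendsto_nat_of_nonneg fun k ↦ by positivity]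
  simpa only [partial_fractions] using
    tendsto_sum_range_sum_mul_inv_add (sum_nodalWeight_eq_zero hv hs) a

theorem stmt_10 (n : ℕ) (hn : 2 ≤ n) (a : ℕ → ℕ)
    (ha : ∀ i j, i < j → j < n → a i < a j) :
    ∑' k : ℕ, ∏ i ∈ Finset.range n, (1 : ℝ) / (1 + a i + k) =
      ∑ i ∈ Finset.range (n - 1),
        (∏ j ∈ (Finset.range n).erase i, (1 : ℝ) / ((a j : ℝ) - a i)) *
          ∑ k ∈ Finset.Icc (a i + 1) (a (n - 1)), (1 : ℝ) / k := by
  have hinj : Set.InjOn a (range n) := by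
    rw [coe_range]
    exact StrictMonoOn.injOn fun i _ j hj hij ↦ ha i j hij hj
  have hv : Set.InjOn (fun i ↦ -(a i : ℝ)) (range n) :=
    fun i hi j hj h ↦ hinj hi hj (by simpa using h)
  have hsum := hasSum_prod_inv_add_one_add hinj (by simpa using hn)
  have hw0 := sum_nodalWeight_eq_zero hv (by simpa using hn)
  obtain ⟨m, rfl⟩ := Nat.exists_eq_add_one_of_ne_zero (by omega : n ≠ 0)
  set w := nodalWeight (range (m + 1)) (fun i ↦ -(a i : ℝ))
  have hw (i : ℕ) : ∏ j ∈ (range (m + 1)).erase i, ((a j : ℝ) - a i)⁻¹ = w i := by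
    simp only [w, nodalWeight, neg_sub_neg]
  simp only [Nat.add_sub_cancel, one_div, hw]
  calc ∑' k : ℕ, ∏ i ∈ range (m + 1), ((1 : ℝ) + a i + k)⁻¹
      = -∑ i ∈ range (m + 1), w i * harmonic (a i) := by
        simp_rw [← hsum.tsum_eq, add_comm (1 : ℝ)]
    _ = ∑ i ∈ range (m + 1), w i * ((harmonic (a m) : ℝ) - harmonic (a i)) := by
        simp only [mul_sub, sum_sub_distrib, ← sum_mul, hw0, zero_mul, zero_sub]
    _ = _ := by
        rw [sum_range_succ, sub_self, mul_zero, add_zero]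
        refine sum_congr rfl fun i hi ↦ ?_
        rw [sum_Icc_inv_eq_harmonic_sub (ha i m (mem_range.1 hi) m.lt_succ_self).le]
end

section
/- Let a_1 < a_2 < ... < a_n be nonnegative integers with n ≥ 2, m ≥ 1 an integer, and λ_i = ∏_{j≠i} 1/(a_j - a_i). Then Σ_{k=0}^∞ Σ_{i=1}^n λ_i/(1 + a_i + k)^{m+1} = Σ_{i=1}^{n-1} λ_i (H_{m+1}(a_n) - H_{m+1}(a_i)), where H_s(N) = Σ_{k=1}^N 1/k^s. -/
/-!
`λ_i` is the Lagrange nodal weight `∏_{j≠i} (v_i - v_j)⁻¹` of the nodes `v_i = -a_i`, so `∑ λ_i`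
is the coefficient of `X^(n-1)` in the interpolant of the constant `1`, which vanishes for `n ≥ 2`.
Each inner series converges absolutely and equals the tail `ζ(m+1) - H_{m+1}(a_i)` of the zeta
series; since `∑ λ_i = 0` the `ζ(m+1)` terms cancel, and subtracting `0 = ∑ λ_i H_{m+1}(a_n)`
leaves the stated finite sum, whose `i = n` term is zero.
-/

open Finset Polynomial

theorem Lagrange.sum_prod_one_div_sub_eq_zero {F ι : Type*} [Field F] [DecidableEq ι]
    {s : Finset ι} {v : ι → F} (hvs : Set.InjOn v s) (hs : 2 ≤ #s) :
    ∑ i ∈ s, ∏ j ∈ s.erase i, 1 / (v j - v i) = 0 := by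
  have hvs' : Set.InjOn (fun i => -v i) s := fun i hi j hj h => hvs hi hj (neg_inj.mp h)
  have h := Lagrange.coeff_eq_sum hvs' (P := 1)
    (by rw [degree_one]; exact_mod_cast (by omega : 0 < #s))
  rw [coeff_one, if_neg (by omega)] at h
  simpa only [eval_one, neg_sub_neg, one_div, prod_inv_distrib] using h.symm

theorem summable_one_div_add_pow (b : ℕ) {p : ℕ} (hp : 1 < p) :
    Summable fun k : ℕ => 1 / (1 + b + k : ℝ) ^ p :=
  ((summable_nat_add_iff (b + 1)).2 (Real.summable_one_div_nat_pow.2 hp)).congr fun k => by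
    push_cast; ring

theorem tsum_one_div_add_pow (b : ℕ) {p : ℕ} (hp : 1 < p) :
    ∑' k : ℕ, 1 / (1 + b + k : ℝ) ^ p =
      ∑' k : ℕ, 1 / (k : ℝ) ^ p - ∑ k ∈ Icc 1 b, 1 / (k : ℝ) ^ p := by
  have h := (Real.summable_one_div_nat_pow.2 hp).sum_add_tsum_nat_add (b + 1)
  have hrange : range (b + 1) = insert 0 (Icc 1 b) := by ext; simp; omega
  rw [hrange, sum_insert (by simp)] at h
  rw [← h]
  simp [zero_pow (by omega : p ≠ 0), add_comm]

theorem sum_range_succ_mul_sub_eq {R : Type*} [CommRing R] {w x : ℕ → R} {N : ℕ}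
    (hw : ∑ i ∈ range (N + 1), w i = 0) (c : R) :
    ∑ i ∈ range (N + 1), w i * (c - x i) = ∑ i ∈ range N, w i * (x N - x i) := by
  have hshift : ∑ i ∈ range (N + 1), w i * (c - x i) =
      ∑ i ∈ range (N + 1), w i * (x N - x i) + (c - x N) * ∑ i ∈ range (N + 1), w i := by
    rw [mul_sum, ← sum_add_distrib]
    exact sum_congr rfl fun i _ => by ring
  rw [hshift, hw, mul_zero, add_zero, sum_range_succ, sub_self, mul_zero, add_zero]

theorem stmt_11 (n : ℕ) (hn : 2 ≤ n) (m : ℕ) (hm : 1 ≤ m) (a : ℕ → ℕ)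
    (ha : ∀ i j, i < j → j < n → a i < a j) :
    ∑' k : ℕ, ∑ i ∈ Finset.range n,
        (∏ j ∈ (Finset.range n).erase i, (1 : ℝ) / ((a j : ℝ) - a i)) /
          (1 + a i + k : ℝ) ^ (m + 1) =
      ∑ i ∈ Finset.range (n - 1),
        (∏ j ∈ (Finset.range n).erase i, (1 : ℝ) / ((a j : ℝ) - a i)) *
          ((∑ k ∈ Finset.Icc 1 (a (n - 1)), 1 / (k : ℝ) ^ (m + 1)) -
            ∑ k ∈ Finset.Icc 1 (a i), 1 / (k : ℝ) ^ (m + 1)) := by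
  obtain ⟨N, rfl⟩ : ∃ N, n = N + 1 := ⟨n - 1, by omega⟩
  have hmono : StrictMonoOn (fun i => (a i : ℝ)) (range (N + 1) : Set ℕ) :=
    fun i _ j hj hij => Nat.cast_lt.mpr (ha i j hij (mem_range.mp hj))
  have hweights := Lagrange.sum_prod_one_div_sub_eq_zero hmono.injOn (by simpa using hn)
  have hp : 1 < m + 1 := by omega
  calc _ = ∑ i ∈ range (N + 1), (∏ j ∈ (range (N + 1)).erase i, 1 / ((a j : ℝ) - a i)) *
          ∑' k : ℕ, 1 / (1 + a i + k : ℝ) ^ (m + 1) := by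
        simp only [← tsum_mul_left, mul_one_div]
        exact Summable.tsum_finsetSum fun i _ => by
          simpa only [mul_one_div] using (summable_one_div_add_pow _ hp).mul_left _
    _ = _ := by
        simp only [tsum_one_div_add_pow _ hp]
        exact sum_range_succ_mul_sub_eq hweights _
end

section
/- Let c_1,...,c_r be distinct integers and b_1,...,b_r positive integers, with μ_{ij} = ((-1)^{j-1}/(b_i-j)!) · d^{b_i-j}/dz^{b_i-j}|_{z=c_i} ∏_{ℓ≠i} 1/(c_ℓ - z)^{b_ℓ}. Then the reduced denominator of the rational number μ_{ij} divides (b_i - j)! · ∏_{ℓ≠i} (c_ℓ - c_i)^{b_ℓ + b_i - j}. -/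
/-!
The `k`-th derivative of `((c - z) ^ b)⁻¹` is `b (b + 1) ⋯ (b + k - 1) · ((c - z) ^ (b + k))⁻¹`.
Hence, by induction on the set of factors with Leibniz's rule, the `n`-th derivative of
`∏ ℓ, ((c ℓ - z) ^ b ℓ)⁻¹` at an integer `x ≠ c ℓ` becomes an integer once multiplied by
`∏ ℓ, (c ℓ - x) ^ (b ℓ + n)`. So `μ_{ij}` times `(b_i - j)! · ∏ ℓ ≠ i, (c ℓ - c i) ^ (b ℓ + b i - j)`
is an integer, and the denominator of `μ_{ij}` divides this multiplier.
-/

open Finset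

theorem Rat.den_dvd_of_mul_eq_intCast {q : ℚ} {N m : ℤ} (h : q * N = m) : (q.den : ℤ) ∣ N := by
  rcases eq_or_ne N 0 with rfl | hN
  · exact dvd_zero _
  · have hq : q = Rat.divInt m N := by
      rw [Rat.divInt_eq_div, eq_div_iff (by exact_mod_cast hN), h]
    exact hq ▸ Rat.den_dvd m N

section InvConstSubPow

variable {𝕜 : Type*} [NontriviallyNormedField 𝕜]

theorem iteratedDeriv_inv_const_sub_pow (c : 𝕜) (b n : ℕ) (x : 𝕜) :
    iteratedDeriv n (fun z : 𝕜 => ((c - z) ^ b)⁻¹) x =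
      (∏ k ∈ range n, ((b : 𝕜) + k)) * ((c - x) ^ (b + n))⁻¹ := by
  have h := congrFun (iteratedDeriv_comp_const_sub n (fun y : 𝕜 => y ^ (-(b : ℤ))) c) x
  rw [iteratedDeriv_eq_iterate (f := fun y : 𝕜 => y ^ (-(b : ℤ))), iter_deriv_zpow] at h
  simp only [zpow_neg, zpow_natCast] at h
  have hsign : ∏ k ∈ range n, ((b : 𝕜) + k) =
      (-1) ^ n * ∏ k ∈ range n, (((-(b : ℤ) : ℤ) : 𝕜) - k) := calc
    _ = ∏ k ∈ range n, -(((-(b : ℤ) : ℤ) : 𝕜) - k) := prod_congr rfl fun k _ => by push_cast; ring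
    _ = _ := by rw [prod_neg, card_range]
  rw [h, hsign, smul_eq_mul, mul_assoc, ← zpow_natCast (c - x), ← zpow_neg]
  push_cast; ring_nf

theorem iteratedDeriv_inv_const_sub_pow_mul_pow {c x : 𝕜} (b n : ℕ) (h : c ≠ x) :
    iteratedDeriv n (fun z : 𝕜 => ((c - z) ^ b)⁻¹) x * (c - x) ^ (b + n) =
      ∏ k ∈ range n, ((b : 𝕜) + k) := by
  rw [iteratedDeriv_inv_const_sub_pow, inv_mul_cancel_right₀ (pow_ne_zero _ (sub_ne_zero.mpr h))]

theorem contDiffAt_inv_const_sub_pow {c x : 𝕜} (b : ℕ) {n : WithTop ℕ∞} (h : c ≠ x) :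
    ContDiffAt 𝕜 n (fun z : 𝕜 => ((c - z) ^ b)⁻¹) x := by
  fun_prop (disch := exact pow_ne_zero _ (sub_ne_zero.mpr h))

theorem iteratedDeriv_prod_inv_const_sub_pow_mul_mem_bot [CharZero 𝕜] {ι : Type*} (c : ι → ℤ) (b : ι → ℕ)
    (x : ℤ) (s : Finset ι) (hx : ∀ ℓ ∈ s, c ℓ ≠ x) (n : ℕ) :
    iteratedDeriv n (fun z : 𝕜 => ∏ ℓ ∈ s, (((c ℓ : 𝕜) - z) ^ b ℓ)⁻¹) x *
      ∏ ℓ ∈ s, ((c ℓ : 𝕜) - x) ^ (b ℓ + n) ∈ (⊥ : Subring 𝕜) := by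
  classical
  induction s using Finset.induction_on generalizing n with
  | empty =>
    simp only [prod_empty, mul_one, iteratedDeriv_const]
    split_ifs
    exacts [one_mem _, zero_mem _]
  | insert a s ha ih =>
    have hxa : (c a : 𝕜) ≠ x := by exact_mod_cast hx a (mem_insert_self a s)
    have hxs : ∀ ℓ ∈ s, c ℓ ≠ x := fun ℓ hℓ => hx ℓ (mem_insert_of_mem hℓ)
    set g : 𝕜 → 𝕜 := fun z => (((c a : 𝕜) - z) ^ b a)⁻¹
    set f : 𝕜 → 𝕜 := fun z => ∏ ℓ ∈ s, (((c ℓ : 𝕜) - z) ^ b ℓ)⁻¹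
    have hf : ContDiffAt 𝕜 n f x :=
      contDiffAt_prod fun ℓ hℓ => contDiffAt_inv_const_sub_pow _ (by exact_mod_cast hxs ℓ hℓ)
    simp only [prod_insert ha]
    rw [iteratedDeriv_fun_mul (f := g) (contDiffAt_inv_const_sub_pow _ hxa) hf, sum_mul]
    refine sum_mem fun k hk => ?_
    have hkn : k ≤ n := Nat.lt_succ_iff.mp (mem_range.mp hk)
    have hsplit : ∀ (y : 𝕜) (e p q : ℕ), p + q = n → y ^ (e + n) = y ^ (e + p) * y ^ q :=
      fun y e p q hpq => by rw [← pow_add]; congr 1; omega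
    have hterm : ((n.choose k : ℕ) : 𝕜) * iteratedDeriv k g x * iteratedDeriv (n - k) f x *
        (((c a : 𝕜) - x) ^ (b a + n) * ∏ ℓ ∈ s, ((c ℓ : 𝕜) - x) ^ (b ℓ + n)) =
        (n.choose k : ℕ) * (iteratedDeriv k g x * ((c a : 𝕜) - x) ^ (b a + k)) *
          (iteratedDeriv (n - k) f x * ∏ ℓ ∈ s, ((c ℓ : 𝕜) - x) ^ (b ℓ + (n - k))) *
          (((c a : 𝕜) - x) ^ (n - k) * ∏ ℓ ∈ s, ((c ℓ : 𝕜) - x) ^ k) := by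
      rw [hsplit _ _ k (n - k) (by omega),
        prod_congr rfl fun ℓ _ => hsplit _ (b ℓ) (n - k) k (by omega), prod_mul_distrib]
      ring
    rw [hterm, iteratedDeriv_inv_const_sub_pow_mul_pow _ _ hxa]
    refine mul_mem (mul_mem (mul_mem (natCast_mem _ _) ?_) (ih hxs (n - k))) ?_
    · exact prod_mem fun i _ => add_mem (natCast_mem _ _) (natCast_mem _ _)
    · exact Subring.mem_bot.mpr ⟨(c a - x) ^ (n - k) * ∏ ℓ ∈ s, (c ℓ - x) ^ k, by push_cast; rfl⟩

end InvConstSubPow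

theorem stmt_13_general (r : ℕ) (c : Fin r → ℤ) (hc : Function.Injective c)
    (b : Fin r → ℕ) (i : Fin r) (j : ℕ)
    (hj2 : j ≤ b i) (q : ℚ)
    (hq : (q : ℝ) = ((-1 : ℝ) ^ (j - 1) / ((b i - j).factorial : ℝ)) *
        iteratedDeriv (b i - j)
          (fun z : ℝ => ∏ ℓ ∈ Finset.univ.erase i, (((c ℓ : ℝ) - z) ^ (b ℓ))⁻¹)
          ((c i : ℝ))) :
    (q.den : ℤ) ∣ ((b i - j).factorial : ℤ) *
        ∏ ℓ ∈ Finset.univ.erase i, (c ℓ - c i) ^ (b ℓ + b i - j) := by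
  set n := b i - j
  obtain ⟨m, hm⟩ := Subring.mem_bot.mp <| iteratedDeriv_prod_inv_const_sub_pow_mul_mem_bot
    (𝕜 := ℝ) c b (c i) (univ.erase i) (fun ℓ hℓ => hc.ne (ne_of_mem_erase hℓ)) n
  have hqm : q * ((n.factorial : ℤ) * ∏ ℓ ∈ univ.erase i, (c ℓ - c i) ^ (b ℓ + n) : ℤ) =
      ((-1) ^ (j - 1) * m : ℤ) := by
    have hfac : (n.factorial : ℝ) ≠ 0 := by positivity
    have : (q : ℝ) * (n.factorial * ∏ ℓ ∈ univ.erase i, ((c ℓ : ℝ) - c i) ^ (b ℓ + n)) =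
        (-1) ^ (j - 1) * m := by
      rw [hq, hm]; field_simp
    exact_mod_cast this
  have hexp : ∀ ℓ, b ℓ + b i - j = b ℓ + n := fun ℓ => by omega
  simpa only [hexp] using Rat.den_dvd_of_mul_eq_intCast hqm

theorem stmt_13 (r : ℕ) (c : Fin r → ℤ) (hc : Function.Injective c)
    (b : Fin r → ℕ) (hb : ∀ i, 0 < b i) (i : Fin r) (j : ℕ)
    (hj1 : 1 ≤ j) (hj2 : j ≤ b i) (q : ℚ)
    (hq : (q : ℝ) = ((-1 : ℝ) ^ (j - 1) / ((b i - j).factorial : ℝ)) *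
        iteratedDeriv (b i - j)
          (fun z : ℝ => ∏ ℓ ∈ Finset.univ.erase i, (((c ℓ : ℝ) - z) ^ (b ℓ))⁻¹)
          ((c i : ℝ))) :
    (q.den : ℤ) ∣ ((b i - j).factorial : ℤ) *
        ∏ ℓ ∈ Finset.univ.erase i, (c ℓ - c i) ^ (b ℓ + b i - j) :=
  stmt_13_general r c hc b i j hj2 q hq
end

section
/- Let f ∈ (0,1), and a, b, n real with the integrals convergent. Then ∫_0^1 s^a (1-s)^b / (1 - f s)^{n+1} ds = (1-f)^{b-n} ∫_0^1 r^b (1-r)^a / (1 - f r)^{a+b+1-n} dr. -/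
/-!
The substitution `s = (1 - r) / (1 - f r)` is an involution of `(0, 1)` exchanging its endpoints,
with `|ds/dr| = (1 - f) / (1 - f r)²`, `1 - s = r (1 - f) / (1 - f r)` and
`1 - f s = (1 - f) / (1 - f r)`. Substituting turns the left integrand into `(1 - f) ^ (b - n)`
times the right one.
-/

open Real MeasureTheory Set

namespace MoebiusFlip

variable {f x : ℝ}

noncomputable def moebiusFlip (f x : ℝ) : ℝ := (1 - x) / (1 - f * x)

lemma one_sub_mul_pos (hf : f < 1) (hx : x ∈ Icc (0 : ℝ) 1) : 0 < 1 - f * x := by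
  nlinarith [hx.1, hx.2, mul_nonneg hx.1 (sub_nonneg.2 hf.le)]

lemma one_sub_moebiusFlip (hf : f < 1) (hx : x ∈ Icc (0 : ℝ) 1) :
    1 - moebiusFlip f x = x * (1 - f) / (1 - f * x) := by
  have hD := (one_sub_mul_pos hf hx).ne'
  rw [moebiusFlip, eq_div_iff hD, sub_mul, div_mul_cancel₀ _ hD]
  ring

lemma one_sub_mul_moebiusFlip (hf : f < 1) (hx : x ∈ Icc (0 : ℝ) 1) :
    1 - f * moebiusFlip f x = (1 - f) / (1 - f * x) := by
  have hD := (one_sub_mul_pos hf hx).ne'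
  rw [moebiusFlip, eq_div_iff hD, sub_mul, mul_div_assoc', div_mul_cancel₀ _ hD]
  ring

lemma moebiusFlip_mem_Ioo (hf : f < 1) (hx : x ∈ Ioo (0 : ℝ) 1) :
    moebiusFlip f x ∈ Ioo (0 : ℝ) 1 := by
  have hD := one_sub_mul_pos hf (Ioo_subset_Icc_self hx)
  refine ⟨div_pos (by linarith [hx.2]) hD, (div_lt_one hD).2 ?_⟩
  nlinarith [hx.1]

lemma moebiusFlip_moebiusFlip (hf : f < 1) (hx : x ∈ Icc (0 : ℝ) 1) :
    moebiusFlip f (moebiusFlip f x) = x := by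
  have hD := (one_sub_mul_pos hf hx).ne'
  have h1f : 1 - f ≠ 0 := by linarith
  rw [moebiusFlip, one_sub_moebiusFlip hf hx, one_sub_mul_moebiusFlip hf hx,
    div_div_div_cancel_right₀ hD, mul_div_cancel_right₀ _ h1f]

lemma image_moebiusFlip_Ioo (hf : f < 1) : moebiusFlip f '' Ioo 0 1 = Ioo 0 1 :=
  Subset.antisymm (image_subset_iff.2 fun _ hx => moebiusFlip_mem_Ioo hf hx) fun x hx =>
    ⟨moebiusFlip f x, moebiusFlip_mem_Ioo hf hx,
      moebiusFlip_moebiusFlip hf (Ioo_subset_Icc_self hx)⟩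

lemma injOn_moebiusFlip (hf : f < 1) : InjOn (moebiusFlip f) (Ioo 0 1) := fun x hx y hy hxy => by
  rw [← moebiusFlip_moebiusFlip hf (Ioo_subset_Icc_self hx), hxy,
    moebiusFlip_moebiusFlip hf (Ioo_subset_Icc_self hy)]

lemma hasDerivAt_moebiusFlip (hx : 1 - f * x ≠ 0) :
    HasDerivAt (moebiusFlip f) ((f - 1) / (1 - f * x) ^ 2) x := by
  refine (((hasDerivAt_id' x).const_sub 1).div
    (((hasDerivAt_id' x).const_mul f).const_sub 1) hx).congr_deriv ?_
  ring

theorem integral_comp_moebiusFlip {E : Type*} [NormedAddCommGroup E] [NormedSpace ℝ E]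
    (hf : f < 1) (g : ℝ → E) :
    ∫ s in (0 : ℝ)..1, g s =
      ∫ r in (0 : ℝ)..1, ((1 - f) / (1 - f * r) ^ 2) • g (moebiusFlip f r) := by
  simp only [intervalIntegral.integral_of_le zero_le_one, integral_Ioc_eq_integral_Ioo]
  conv_lhs => rw [← image_moebiusFlip_Ioo hf]
  rw [integral_image_eq_integral_abs_deriv_smul measurableSet_Ioo
    (fun r hr => (hasDerivAt_moebiusFlip (one_sub_mul_pos hf
      (Ioo_subset_Icc_self hr)).ne').hasDerivWithinAt) (injOn_moebiusFlip hf)]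
  refine setIntegral_congr_fun measurableSet_Ioo fun r hr => ?_
  have hD := one_sub_mul_pos hf (Ioo_subset_Icc_self hr)
  rw [abs_div, abs_of_neg (by linarith), abs_of_pos (by positivity), neg_sub]

lemma jacobian_mul_integrand_moebiusFlip (a b n : ℝ) (hf : f < 1) (hx : x ∈ Ioo (0 : ℝ) 1) :
    (1 - f) / (1 - f * x) ^ 2 * (moebiusFlip f x ^ a * (1 - moebiusFlip f x) ^ b /
        (1 - f * moebiusFlip f x) ^ (n + 1)) =
      (1 - f) ^ (b - n) * (x ^ b * (1 - x) ^ a / (1 - f * x) ^ (a + b + 1 - n)) := by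
  have hD := one_sub_mul_pos hf (Ioo_subset_Icc_self hx)
  have h1f : 0 < 1 - f := by linarith
  have h1x : 0 < 1 - x := by linarith [hx.2]
  rw [one_sub_moebiusFlip hf (Ioo_subset_Icc_self hx),
    one_sub_mul_moebiusFlip hf (Ioo_subset_Icc_self hx), moebiusFlip, div_rpow h1x.le hD.le,
    div_rpow (mul_nonneg hx.1.le h1f.le) hD.le, mul_rpow hx.1.le h1f.le, div_rpow h1f.le hD.le]
  have e1 : (1 - f) ^ (b - n) = (1 - f) ^ b * (1 - f) / (1 - f) ^ (n + 1) := by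
    rw [← rpow_add_one h1f.ne', ← rpow_sub h1f]
    ring_nf
  have e2 : (1 - f * x) ^ (a + b + 1 - n) =
      (1 - f * x) ^ a * (1 - f * x) ^ b * (1 - f * x) ^ (2 : ℝ) / (1 - f * x) ^ (n + 1) := by
    rw [← rpow_add hD, ← rpow_add hD, ← rpow_sub hD]
    ring_nf
  rw [e1, e2, rpow_two]
  field_simp

end MoebiusFlip

open MoebiusFlip in
theorem stmt_15_general (f a b n : ℝ) (hf : f ∈ Set.Ioo (0 : ℝ) 1) :
    ∫ s in (0 : ℝ)..1, s ^ a * (1 - s) ^ b / (1 - f * s) ^ (n + 1) =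
      (1 - f) ^ (b - n) *
        ∫ r in (0 : ℝ)..1, r ^ b * (1 - r) ^ a / (1 - f * r) ^ (a + b + 1 - n) := by
  rw [integral_comp_moebiusFlip hf.2, ← intervalIntegral.integral_const_mul]
  simp only [intervalIntegral.integral_of_le zero_le_one, integral_Ioc_eq_integral_Ioo]
  exact setIntegral_congr_fun measurableSet_Ioo fun r hr =>
    jacobian_mul_integrand_moebiusFlip a b n hf.2 hr

theorem stmt_15 (f a b n : ℝ) (hf : f ∈ Set.Ioo (0 : ℝ) 1)
    (h1 : IntervalIntegrable
      (fun s : ℝ => s ^ a * (1 - s) ^ b / (1 - f * s) ^ (n + 1)) MeasureTheory.volume 0 1)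
    (h2 : IntervalIntegrable
      (fun r : ℝ => r ^ b * (1 - r) ^ a / (1 - f * r) ^ (a + b + 1 - n)) MeasureTheory.volume 0 1) :
    ∫ s in (0 : ℝ)..1, s ^ a * (1 - s) ^ b / (1 - f * s) ^ (n + 1) =
      (1 - f) ^ (b - n) *
        ∫ r in (0 : ℝ)..1, r ^ b * (1 - r) ^ a / (1 - f * r) ^ (a + b + 1 - n) :=
  stmt_15_general f a b n hf
end
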